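/- arXiv:2510.13612 — 14 statements merged into one kernel-verified Lean document; each statement's English description precedes it below -/
import Mathlib

section
/- Let S be a finitely generated submonoid of ℕ^d and P a nonempty finite subset of ℕ^d. Then for every nonzero s ∈ S there exists p ∈ P with s + p ∈ S if and only if for every minimal generator a of S there exists p ∈ P with a + p ∈ S. -/
/-- `a` is a minimal generator of `S`: a nonzero element of `S` that is not
a sum of two nonzero elements of `S`. -/
def IsMinGen {d : ℕ} (S : Set (Fin d → ℕ)) (a : Fin d → ℕ) : Prop :=
  a ∈ S ∧ a ≠ 0 ∧ ¬ ∃ x ∈ S, ∃ y ∈ S, x ≠ 0 ∧ y ≠ 0 ∧ a = x + y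

/-! Every nonzero `s ∈ S` splits off a minimal generator: if `s` is not one, `s = x + y` with
`x < s` in the (well-founded) product order on `ℕ^d`, and induction applies to `x`. -/

theorem exists_isMinGen_add_eq {d : ℕ} (S : AddSubmonoid (Fin d → ℕ)) (s : Fin d → ℕ)
    (hs : s ∈ S) (hs0 : s ≠ 0) :
    ∃ a, IsMinGen (S : Set (Fin d → ℕ)) a ∧ ∃ t ∈ S, s = a + t := by
  induction s using WellFoundedLT.induction with
  | _ s ih =>
    by_cases hmin : IsMinGen (S : Set (Fin d → ℕ)) s
    · exact ⟨s, hmin, 0, S.zero_mem, (add_zero s).symm⟩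
    obtain ⟨x, hx, y, hy, hx0, hy0, rfl⟩ : ∃ x ∈ (S : Set (Fin d → ℕ)),
        ∃ y ∈ (S : Set (Fin d → ℕ)), x ≠ 0 ∧ y ≠ 0 ∧ s = x + y := by
      by_contra h
      exact hmin ⟨hs, hs0, h⟩
    have hlt : x < x + y := lt_add_of_pos_right x (pos_iff_ne_zero.mpr hy0)
    obtain ⟨a, ha, t, ht, rfl⟩ := ih x hlt hx hx0
    exact ⟨a, ha, t + y, S.add_mem ht hy, add_assoc a t y⟩

theorem stmt_0_general {d : ℕ} (S : AddSubmonoid (Fin d → ℕ))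
    (P : Set (Fin d → ℕ)) :
    (∀ s ∈ S, s ≠ 0 → ∃ p ∈ P, s + p ∈ S) ↔
      (∀ a, IsMinGen (S : Set (Fin d → ℕ)) a → ∃ p ∈ P, a + p ∈ S) := by
  refine ⟨fun h a ha => h a ha.1 ha.2.1, fun h s hs hs0 => ?_⟩
  obtain ⟨a, ha, t, ht, rfl⟩ := exists_isMinGen_add_eq S s hs hs0
  obtain ⟨p, hp, hap⟩ := h a ha
  refine ⟨p, hp, ?_⟩
  rw [add_right_comm]
  exact S.add_mem hap ht

theorem stmt_0 {d : ℕ} (S : AddSubmonoid (Fin d → ℕ)) (hFG : S.FG)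
    (P : Set (Fin d → ℕ)) (hPfin : P.Finite) (hPne : P.Nonempty) :
    (∀ s ∈ S, s ≠ 0 → ∃ p ∈ P, s + p ∈ S) ↔
      (∀ a, IsMinGen (S : Set (Fin d → ℕ)) a → ∃ p ∈ P, a + p ∈ S) :=
  stmt_0_general S P
end

section
/- Let S be a P-semigroup that is a C-semigroup, and let a be a minimal generator of S such that S \ {a} is a submonoid. Then S \ {a} is NOT a P-semigroup if and only if there exists p ∈ P such that a − p ∈ S \ {0} and a − p + p' ∉ S for all p' ∈ P \ {p}. -/
/-- A monomial order on `ℕ^d`: a total order compatible with addition,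
with `0` as least element. -/
def IsMonomialOrder (d : ℕ) (le : (Fin d → ℕ) → (Fin d → ℕ) → Prop) : Prop :=
  (∀ a, le a a) ∧ (∀ a b, le a b → le b a → a = b) ∧
  (∀ a b c, le a b → le b c → le a c) ∧ (∀ a b, le a b ∨ le b a) ∧
  (∀ a b c, le a b → le (a + c) (b + c)) ∧ (∀ a, le 0 a)

/-- `S` is a `C`-semigroup: a submonoid of the cone `C` with finite complement in `C`. -/
def IsCSgp {d : ℕ} (C : AddSubmonoid (Fin d → ℕ)) (S : Set (Fin d → ℕ)) : Prop :=
  0 ∈ S ∧ (∀ x ∈ S, ∀ y ∈ S, x + y ∈ S) ∧ S ⊆ (C : Set (Fin d → ℕ)) ∧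
    ((C : Set (Fin d → ℕ)) \ S).Finite

/-- `S` is a `P`-semigroup: for every nonzero `s ∈ S` there is `p ∈ P` with `s + p ∈ S`. -/
def IsPSgp {d : ℕ} (P : Set (Fin d → ℕ)) (S : Set (Fin d → ℕ)) : Prop :=
  ∀ s ∈ S, s ≠ 0 → ∃ p ∈ P, s + p ∈ S

theorem not_isPSgp_iff {d : ℕ} {P S : Set (Fin d → ℕ)} :
    ¬ IsPSgp P S ↔ ∃ s ∈ S, s ≠ 0 ∧ ∀ p ∈ P, s + p ∉ S := by
  simp [IsPSgp]

theorem forall_add_notMem_diff_singleton_iff {M : Type*} [AddLeftCancelSemigroup M]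
    {P S : Set M} {s a : M} (hs : ∃ p ∈ P, s + p ∈ S) :
    (∀ p ∈ P, s + p ∉ S \ {a}) ↔ ∃ p ∈ P, s + p = a ∧ ∀ p' ∈ P, p' ≠ p → s + p' ∉ S := by
  constructor
  · intro h
    obtain ⟨p, hpP, hpS⟩ := hs
    have hpa : s + p = a := by simpa [hpS] using h p hpP
    refine ⟨p, hpP, hpa, fun p' hp'P hp'p hp'S => hp'p ?_⟩
    have hp'a : s + p' = a := by simpa [hp'S] using h p' hp'P
    exact add_left_cancel (hp'a.trans hpa.symm)
  · rintro ⟨p, -, hpa, huniq⟩ p' hp'P ⟨hp'S, hp'a⟩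
    by_cases hp'p : p' = p
    · exact hp'a (hp'p ▸ hpa)
    · exact huniq p' hp'P hp'p hp'S

theorem stmt_2_general {d : ℕ}
    (P : Set (Fin d → ℕ)) (hP0 : (0 : Fin d → ℕ) ∉ P)
    (S : Set (Fin d → ℕ)) (hSP : IsPSgp P S)
    (a : Fin d → ℕ) :
    ¬ IsPSgp P (S \ {a}) ↔
      ∃ p ∈ P, ∃ s ∈ S, s ≠ 0 ∧ s + p = a ∧
        ∀ p' ∈ P, p' ≠ p → s + p' ∉ S := by
  rw [not_isPSgp_iff]
  constructor
  · rintro ⟨s, ⟨hsS, -⟩, hs0, hs⟩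
    obtain ⟨p, hpP, hpa, huniq⟩ :=
      (forall_add_notMem_diff_singleton_iff (hSP s hsS hs0)).1 hs
    exact ⟨p, hpP, s, hsS, hs0, hpa, huniq⟩
  · rintro ⟨p, hpP, s, hsS, hs0, hpa, huniq⟩
    have hsa : s ≠ a := hpa ▸ left_ne_add.2 (ne_of_mem_of_not_mem hpP hP0)
    exact ⟨s, ⟨hsS, hsa⟩, hs0,
      (forall_add_notMem_diff_singleton_iff (hSP s hsS hs0)).2 ⟨p, hpP, hpa, huniq⟩⟩

theorem stmt_2 {d : ℕ} (C : AddSubmonoid (Fin d → ℕ)) (hCfg : C.FG)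
    (P : Set (Fin d → ℕ)) (hPfin : P.Finite) (hP0 : (0 : Fin d → ℕ) ∉ P)
    (S : Set (Fin d → ℕ)) (hS : IsCSgp C S) (hSP : IsPSgp P S)
    (a : Fin d → ℕ) (ha : IsMinGen S a)
    (hmono : 0 ∈ S \ {a} ∧ ∀ x ∈ S \ {a}, ∀ y ∈ S \ {a}, x + y ∈ S \ {a}) :
    ¬ IsPSgp P (S \ {a}) ↔
      ∃ p ∈ P, ∃ s ∈ S, s ≠ 0 ∧ s + p = a ∧
        ∀ p' ∈ P, p' ≠ p → s + p' ∉ S :=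
  stmt_2_general P hP0 S hSP a
end

section
/- Let C ⊆ ℕ^d be a finitely generated integer cone, P ⊂ ℕ^d finite with 0 ∉ P and P ∩ C ≠ ∅, ⪯ a monomial order with {m ∈ C : m ≺ f} finite for all f ∈ C, and f ∈ C \ {0}. Then Δ(f) = {x ∈ C : x ≻ f} ∪ {0} is a P-semigroup. -/
theorem IsMonomialOrder.le_add_right {d : ℕ} {le : (Fin d → ℕ) → (Fin d → ℕ) → Prop}
    (hle : IsMonomialOrder d le) (a b : Fin d → ℕ) : le a (a + b) := by
  obtain ⟨-, -, -, -, hadd, hzero⟩ := hle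
  have h := hadd 0 b a (hzero b)
  rwa [zero_add, add_comm] at h

theorem IsMonomialOrder.lt_add_right {d : ℕ} {le : (Fin d → ℕ) → (Fin d → ℕ) → Prop}
    (hle : IsMonomialOrder d le) {f a : Fin d → ℕ} (hfa : le f a ∧ a ≠ f) (b : Fin d → ℕ) :
    le f (a + b) ∧ a + b ≠ f := by
  obtain ⟨hfa, hne⟩ := hfa
  have hab := hle.le_add_right a b
  obtain ⟨-, hanti, htrans, -⟩ := hle
  exact ⟨htrans _ _ _ hfa hab, fun h => hne (hanti _ _ (h ▸ hab) hfa)⟩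

theorem stmt_4_general {d : ℕ} (C : AddSubmonoid (Fin d → ℕ))
    (P : Set (Fin d → ℕ))
    (hPC : (P ∩ (C : Set (Fin d → ℕ))).Nonempty)
    (le : (Fin d → ℕ) → (Fin d → ℕ) → Prop) (hle : IsMonomialOrder d le)
    (f : Fin d → ℕ) :
    IsPSgp P ({x ∈ (C : Set (Fin d → ℕ)) | le f x ∧ x ≠ f} ∪ {0}) := by
  obtain ⟨p, hpP, hpC⟩ := hPC
  rintro s (⟨hsC, hfs⟩ | hs0) hs
  · exact ⟨p, hpP, Or.inl ⟨C.add_mem hsC hpC, hle.lt_add_right hfs p⟩⟩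
  · exact absurd hs0 hs

theorem stmt_4 {d : ℕ} (C : AddSubmonoid (Fin d → ℕ)) (hCfg : C.FG)
    (P : Set (Fin d → ℕ)) (hPfin : P.Finite) (hP0 : (0 : Fin d → ℕ) ∉ P)
    (hPC : (P ∩ (C : Set (Fin d → ℕ))).Nonempty)
    (le : (Fin d → ℕ) → (Fin d → ℕ) → Prop) (hle : IsMonomialOrder d le)
    (hlow : ∀ f ∈ (C : Set (Fin d → ℕ)),
      {m ∈ (C : Set (Fin d → ℕ)) | le m f ∧ m ≠ f}.Finite)
    (f : Fin d → ℕ) (hf : f ∈ (C : Set (Fin d → ℕ))) (hf0 : f ≠ 0) :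
    IsPSgp P ({x ∈ (C : Set (Fin d → ℕ)) | le f x ∧ x ≠ f} ∪ {0}) :=
  stmt_4_general C P hPC le hle f
end

section
/- Let C ⊆ ℕ^d be a finitely generated integer cone, P finite with P ∩ C ≠ ∅ and 0 ∉ P, and ⪯ a monomial order with all lower sets {m ∈ C : m ≺ f} finite. Then the set of P-semigroups contained in C that are C-semigroups is infinite. -/
theorem stmt_5 {d : ℕ} (C : AddSubmonoid (Fin d → ℕ)) (hCfg : C.FG)
    (P : Set (Fin d → ℕ)) (hPfin : P.Finite) (hP0 : (0 : Fin d → ℕ) ∉ P)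
    (hPC : (P ∩ (C : Set (Fin d → ℕ))).Nonempty)
    (le : (Fin d → ℕ) → (Fin d → ℕ) → Prop) (hle : IsMonomialOrder d le)
    (hlow : ∀ f ∈ (C : Set (Fin d → ℕ)),
      {m ∈ (C : Set (Fin d → ℕ)) | le m f ∧ m ≠ f}.Finite) :
    {S : Set (Fin d → ℕ) | IsCSgp C S ∧ IsPSgp P S}.Infinite := by
  obtain ⟨hrefl, hanti, htrans, htot, hadd, hzero⟩ := hle
  obtain ⟨p, hpP, hpC⟩ := hPC
  have hp0 : p ≠ 0 := fun h => hP0 (h ▸ hpP)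
  set F : (Fin d → ℕ) → Set (Fin d → ℕ) :=
    fun f => {x | x ∈ (C : Set (Fin d → ℕ)) ∧ le f x ∧ x ≠ f} ∪ {0} with hF
  set T : Set (Fin d → ℕ) := {f | f ∈ (C : Set (Fin d → ℕ)) ∧ f ≠ 0} with hTdef
  -- T is infinite
  have hT : T.Infinite := by
    obtain ⟨i, hi⟩ : ∃ i, p i ≠ 0 := Function.ne_iff.mp hp0
    refine Set.infinite_of_injective_forall_mem
      (f := fun n : ℕ => (n + 1) • p) ?_ ?_
    · intro n m h
      have := congrFun h i
      simp only [Pi.smul_apply, smul_eq_mul] at this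
      have := Nat.eq_of_mul_eq_mul_right (Nat.pos_of_ne_zero hi) this
      omega
    · intro n
      refine ⟨AddSubmonoid.nsmul_mem C hpC _, ?_⟩
      intro h
      have := congrFun h i
      have h2 := congrFun h i
      simp at h2
      exact hi (by omega)
  -- key fact: s + p is strictly above s
  have hstep : ∀ s : Fin d → ℕ, le s (s + p) := by
    intro s
    have := hadd 0 p s (hzero p)
    simpa [add_comm] using this
  have hstepy : ∀ x y : Fin d → ℕ, le x (x + y) := by
    intro x y
    have := hadd 0 y x (hzero y)
    simpa [add_comm] using this
  -- each F f (for f ∈ T) is in the target set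
  have hmem : ∀ f ∈ T, F f ∈ {S : Set (Fin d → ℕ) | IsCSgp C S ∧ IsPSgp P S} := by
    rintro f ⟨hfC, hf0⟩
    refine ⟨⟨Or.inr rfl, ?_, ?_, ?_⟩, ?_⟩
    · -- closed under addition
      rintro x (⟨hxC, hfx, hxf⟩ | hx) y (⟨hyC, hfy, hyf⟩ | hy)
      · refine Or.inl ⟨C.add_mem hxC hyC, htrans _ _ _ hfx (hstepy x y), ?_⟩
        intro h
        have hxf' : le x f := by rw [← h]; exact hstepy x y
        have hxeq : x = f := hanti _ _ hxf' hfx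
        have : y = 0 := by
          have h2 : x + y = x + 0 := by rw [hxeq] at h ⊢; simpa using h
          exact add_left_cancel h2
        have hy0 : y ≠ 0 := fun h0 => hf0 (hanti f 0 (h0 ▸ hfy) (hzero f))
        exact hy0 this
      · simp only [Set.mem_singleton_iff] at hy
        exact hy ▸ (by simp only [hF]; exact Or.inl ⟨hxC, hfx, hxf⟩)
      · simp only [Set.mem_singleton_iff] at hx
        exact hx ▸ (by simp only [hF, zero_add]; exact Or.inl ⟨hyC, hfy, hyf⟩)
      · simp only [Set.mem_singleton_iff] at hx hy
        subst hx; subst hy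
        right; simp
    · rintro x (⟨hxC, _⟩ | hx)
      · exact hxC
      · simpa [Set.mem_singleton_iff.mp hx] using C.zero_mem
    · -- finite complement
      apply Set.Finite.subset (((hlow f hfC).union (Set.finite_singleton f)))
      rintro m ⟨hmC, hm⟩
      simp only [hF, Set.mem_union, Set.mem_setOf_eq, Set.mem_singleton_iff, not_or] at hm
      by_cases hmf : m = f
      · exact Or.inr hmf
      · rcases htot f m with h | h
        · exact absurd ⟨hmC, h, hmf⟩ hm.1
        · exact Or.inl ⟨hmC, h, hmf⟩
    · -- P-semigroup
      rintro s (⟨hsC, hfs, hsf⟩ | hs) hs0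
      · refine ⟨p, hpP, Or.inl ⟨C.add_mem hsC hpC, htrans _ _ _ hfs (hstep s), ?_⟩⟩
        intro h
        have : le s f := by rw [← h]; exact hstep s
        exact hsf (hanti _ _ this hfs)
      · exact absurd (Set.mem_singleton_iff.mp hs) hs0
  -- F is injective on T
  have hinj : Set.InjOn F T := by
    rintro f ⟨hfC, hf0⟩ g ⟨hgC, hg0⟩ hFfg
    by_contra hfg
    have key : ∀ a b : Fin d → ℕ, a ∈ (C : Set (Fin d → ℕ)) → le b a → a ≠ b →
        a ≠ 0 → F b = F a → False := by
      intro a b haC hba hab ha0 hE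
      have : a ∈ F b := Or.inl ⟨haC, hba, hab⟩
      rw [hE] at this
      rcases this with ⟨_, _, haa⟩ | h0
      · exact haa rfl
      · exact ha0 (Set.mem_singleton_iff.mp h0)
    rcases htot f g with h | h
    · exact key g f hgC h (fun e => hfg e.symm) hg0 hFfg
    · exact key f g hfC h hfg hf0 hFfg.symm
  exact Set.Infinite.mono (Set.image_subset_iff.mpr hmem) (hT.image hinj)
end

section
/- Let C be a finitely generated integer cone, ⪯ a monomial order, and S a C-semigroup with S ≠ C. Then Fb(S) := max_⪯(C \ S) is a minimal generator of the C-semigroup T = S ∪ {Fb(S)}, and Fb(S) ≻ Fb(T) when C \ T is nonempty. -/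
theorem stmt_6 {d : ℕ} (C : AddSubmonoid (Fin d → ℕ)) (hCfg : C.FG)
    (le : (Fin d → ℕ) → (Fin d → ℕ) → Prop) (hle : IsMonomialOrder d le)
    (S : Set (Fin d → ℕ)) (hS : IsCSgp C S) (hSne : S ≠ (C : Set (Fin d → ℕ)))
    (Fb : Fin d → ℕ) (hFb : Fb ∈ (C : Set (Fin d → ℕ)) \ S)
    (hFbmax : ∀ x ∈ (C : Set (Fin d → ℕ)) \ S, le x Fb) :
    IsMinGen (insert Fb S) Fb ∧
      ∀ g ∈ (C : Set (Fin d → ℕ)) \ insert Fb S,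
        (∀ x ∈ (C : Set (Fin d → ℕ)) \ insert Fb S, le x g) →
          le g Fb ∧ g ≠ Fb := by
  obtain ⟨h0S, hadd, hsub, hfin⟩ := hS
  obtain ⟨hFbC, hFbS⟩ := hFb
  have hFbne : Fb ≠ 0 := fun h => hFbS (h ▸ h0S)
  constructor
  · refine ⟨Set.mem_insert _ _, hFbne, ?_⟩
    rintro ⟨x, hx, y, hy, hx0, hy0, hxy⟩
    rcases hx with rfl | hxS
    · exact hy0 (left_eq_add.mp hxy)
    rcases hy with rfl | hyS
    · exact hx0 (right_eq_add.mp hxy)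
    · exact hFbS (hxy ▸ hadd x hxS y hyS)
  · intro g hg _
    have hgS : g ∉ S := fun h => hg.2 (Set.mem_insert_of_mem _ h)
    have hgFb : g ≠ Fb := fun h => hg.2 (h ▸ Set.mem_insert _ _)
    exact ⟨hFbmax g ⟨hg.1, hgS⟩, hgFb⟩
end

section
/- Let S be a C-semigroup that is a P-semigroup (with respect to a monomial order ⪯ with finite lower sets), with S ≠ Δ(Fb(S)), i.e., S is not ordinary, and let m(S) = min_⪯(S \ {0}). Then S \ {m(S)} is a P-semigroup with the same Frobenius element as S. -/
/-!
Since `0` is the `⪯`-least element and `⪯` is compatible with addition, `a ⪯ a + b` for all `a, b`;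
hence the multiplicity `m` is never a sum `x + y` with `x ∈ S \ {0}` and `y ≠ 0`. In particular
`m` is a minimal generator, so `S \ {m}` is still a monoid, and the witnesses `s + p` of the
`P`-semigroup property (with `p ≠ 0`) never equal `m`. If `Fb ≺ m`, every nonzero element of
`S` lies above `Fb`, so `S = Δ(Fb)`; thus non-ordinarity gives `m ⪯ Fb`, and adding `m` to the
gaps does not change the Frobenius element.
-/

namespace IsMonomialOrder

variable {d : ℕ} {le : (Fin d → ℕ) → (Fin d → ℕ) → Prop}

theorem antisymm (hle : IsMonomialOrder d le) {a b : Fin d → ℕ} (hab : le a b) (hba : le b a) :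
    a = b :=
  hle.2.1 a b hab hba

theorem trans (hle : IsMonomialOrder d le) {a b c : Fin d → ℕ} (hab : le a b) (hbc : le b c) :
    le a c :=
  hle.2.2.1 a b c hab hbc

theorem total (hle : IsMonomialOrder d le) (a b : Fin d → ℕ) : le a b ∨ le b a :=
  hle.2.2.2.1 a b

theorem add_right (hle : IsMonomialOrder d le) {a b : Fin d → ℕ} (hab : le a b)
    (c : Fin d → ℕ) : le (a + c) (b + c) :=
  hle.2.2.2.2.1 a b c hab

theorem zero_le (hle : IsMonomialOrder d le) (a : Fin d → ℕ) : le 0 a :=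
  hle.2.2.2.2.2 a

theorem le_add_right_s7 (hle : IsMonomialOrder d le) (a b : Fin d → ℕ) : le a (a + b) := by
  simpa [add_comm] using hle.add_right (hle.zero_le b) a

theorem add_ne_of_le (hle : IsMonomialOrder d le) {m x y : Fin d → ℕ} (hmx : le m x)
    (hy : y ≠ 0) : x + y ≠ m := by
  intro h
  have hmy : le (m + y) m := h ▸ hle.add_right hmx y
  have : m + y = m := hle.antisymm hmy (hle.le_add_right_s7 m y)
  exact hy (by simpa using this)

end IsMonomialOrder

section Semigroup

variable {d : ℕ} {C : AddSubmonoid (Fin d → ℕ)} {le : (Fin d → ℕ) → (Fin d → ℕ) → Prop}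
  {S : Set (Fin d → ℕ)} {m : Fin d → ℕ}

theorem isMinGen_of_forall_le (hle : IsMonomialOrder d le) (hmS : m ∈ S) (hm0 : m ≠ 0)
    (hmmin : ∀ s ∈ S, s ≠ 0 → le m s) : IsMinGen S m :=
  ⟨hmS, hm0, fun ⟨x, hx, _, _, hx0, hy0, h⟩ => hle.add_ne_of_le (hmmin x hx hx0) hy0 h.symm⟩

theorem IsCSgp.diff_singleton (hS : IsCSgp C S) (hm : IsMinGen S m) : IsCSgp C (S \ {m}) := by
  obtain ⟨h0S, hadd, hsub, hfin⟩ := hS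
  refine ⟨⟨h0S, fun h => hm.2.1 (Set.mem_singleton_iff.mp h).symm⟩, ?_,
    fun x hx => hsub hx.1, ?_⟩
  · rintro x ⟨hxS, hxm⟩ y ⟨hyS, hym⟩
    refine ⟨hadd x hxS y hyS, fun hxy => ?_⟩
    rcases eq_or_ne x 0 with rfl | hx0
    · exact hym (by simpa using hxy)
    rcases eq_or_ne y 0 with rfl | hy0
    · exact hxm (by simpa using hxy)
    exact hm.2.2 ⟨x, hxS, y, hyS, hx0, hy0, (Set.mem_singleton_iff.mp hxy).symm⟩
  · rw [Set.sdiff_sdiff_right]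
    exact hfin.union ((Set.finite_singleton m).subset Set.inter_subset_right)

theorem IsPSgp.diff_singleton {P : Set (Fin d → ℕ)} (hle : IsMonomialOrder d le)
    (hSP : IsPSgp P S) (hP0 : (0 : Fin d → ℕ) ∉ P) (hmmin : ∀ s ∈ S, s ≠ 0 → le m s) :
    IsPSgp P (S \ {m}) := by
  rintro s ⟨hsS, -⟩ hs0
  obtain ⟨p, hpP, hspS⟩ := hSP s hsS hs0
  have hp0 : p ≠ 0 := fun h => hP0 (h ▸ hpP)
  exact ⟨p, hpP, hspS, hle.add_ne_of_le (hmmin s hsS hs0) hp0⟩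

theorem eq_ordinary_of_frobenius_le (hle : IsMonomialOrder d le) (hS : IsCSgp C S)
    {Fb : Fin d → ℕ} (hFb : Fb ∈ (C : Set (Fin d → ℕ)) \ S)
    (hFbmax : ∀ x ∈ (C : Set (Fin d → ℕ)) \ S, le x Fb)
    (hmmin : ∀ s ∈ S, s ≠ 0 → le m s) (hFbm : le Fb m) :
    S = {x ∈ (C : Set (Fin d → ℕ)) | le Fb x ∧ x ≠ Fb} ∪ {0} := by
  ext x
  constructor
  · intro hx
    rcases eq_or_ne x 0 with hx0 | hx0
    · exact Or.inr hx0
    · exact Or.inl ⟨hS.2.2.1 hx, hle.trans hFbm (hmmin x hx hx0), fun h => hFb.2 (h ▸ hx)⟩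
  · rintro (⟨hxC, hFbx, hxFb⟩ | rfl)
    · by_contra hxS
      exact hxFb (hle.antisymm (hFbmax x ⟨hxC, hxS⟩) hFbx)
    · exact hS.1

theorem frobenius_diff_singleton {Fb : Fin d → ℕ} (hFb : Fb ∈ (C : Set (Fin d → ℕ)) \ S)
    (hFbmax : ∀ x ∈ (C : Set (Fin d → ℕ)) \ S, le x Fb) (hmFb : le m Fb) :
    Fb ∈ (C : Set (Fin d → ℕ)) \ (S \ {m}) ∧
      ∀ x ∈ (C : Set (Fin d → ℕ)) \ (S \ {m}), le x Fb := by
  refine ⟨⟨hFb.1, fun h => hFb.2 h.1⟩, fun x hx => ?_⟩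
  rw [Set.sdiff_sdiff_right] at hx
  rcases hx with hx | ⟨-, rfl⟩
  · exact hFbmax x hx
  · exact hmFb

end Semigroup

theorem stmt_7_general {d : ℕ} (C : AddSubmonoid (Fin d → ℕ))
    (P : Set (Fin d → ℕ)) (hP0 : (0 : Fin d → ℕ) ∉ P)
    (le : (Fin d → ℕ) → (Fin d → ℕ) → Prop) (hle : IsMonomialOrder d le)
    (S : Set (Fin d → ℕ)) (hS : IsCSgp C S) (hSP : IsPSgp P S)
    (Fb : Fin d → ℕ) (hFb : Fb ∈ (C : Set (Fin d → ℕ)) \ S)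
    (hFbmax : ∀ x ∈ (C : Set (Fin d → ℕ)) \ S, le x Fb)
    (hnotord : S ≠ ({x ∈ (C : Set (Fin d → ℕ)) | le Fb x ∧ x ≠ Fb} ∪ {0}))
    (m : Fin d → ℕ) (hmS : m ∈ S) (hm0 : m ≠ 0)
    (hmmin : ∀ s ∈ S, s ≠ 0 → le m s) :
    IsCSgp C (S \ {m}) ∧ IsPSgp P (S \ {m}) ∧
      Fb ∈ (C : Set (Fin d → ℕ)) \ (S \ {m}) ∧
      ∀ x ∈ (C : Set (Fin d → ℕ)) \ (S \ {m}), le x Fb := by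
  have hmFb : le m Fb := (hle.total m Fb).resolve_right fun hFbm =>
    hnotord (eq_ordinary_of_frobenius_le hle hS hFb hFbmax hmmin hFbm)
  exact ⟨hS.diff_singleton (isMinGen_of_forall_le hle hmS hm0 hmmin),
    hSP.diff_singleton hle hP0 hmmin, frobenius_diff_singleton hFb hFbmax hmFb⟩

theorem stmt_7 {d : ℕ} (C : AddSubmonoid (Fin d → ℕ)) (hCfg : C.FG)
    (P : Set (Fin d → ℕ)) (hPfin : P.Finite) (hP0 : (0 : Fin d → ℕ) ∉ P)
    (le : (Fin d → ℕ) → (Fin d → ℕ) → Prop) (hle : IsMonomialOrder d le)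
    (hlow : ∀ f ∈ (C : Set (Fin d → ℕ)),
      {x ∈ (C : Set (Fin d → ℕ)) | le x f ∧ x ≠ f}.Finite)
    (S : Set (Fin d → ℕ)) (hS : IsCSgp C S) (hSP : IsPSgp P S)
    (Fb : Fin d → ℕ) (hFb : Fb ∈ (C : Set (Fin d → ℕ)) \ S)
    (hFbmax : ∀ x ∈ (C : Set (Fin d → ℕ)) \ S, le x Fb)
    (hnotord : S ≠ ({x ∈ (C : Set (Fin d → ℕ)) | le Fb x ∧ x ≠ Fb} ∪ {0}))
    (m : Fin d → ℕ) (hmS : m ∈ S) (hm0 : m ≠ 0)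
    (hmmin : ∀ s ∈ S, s ≠ 0 → le m s) :
    IsCSgp C (S \ {m}) ∧ IsPSgp P (S \ {m}) ∧
      Fb ∈ (C : Set (Fin d → ℕ)) \ (S \ {m}) ∧
      ∀ x ∈ (C : Set (Fin d → ℕ)) \ (S \ {m}), le x Fb :=
  stmt_7_general C P hP0 le hle S hS hSP Fb hFb hFbmax hnotord m hmS hm0 hmmin
end

section
/- Let m ≥ 2 and p be positive integers with gcd(m, p) = t ≠ 1, and let P be a finite set of positive integers containing p. Then for every positive integer a, the set S_a = {0} ∪ {m + kt : k ∈ ℕ} ∪ {x ∈ ℕ : x ≥ a·m} is a numerical semigroup with multiplicity m that is a P-semigroup; in particular, the set of P-semigroups with multiplicity m is infinite. -/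
/-!
Since `t ∣ m` and `t ∣ p`, every element `m + k t` of the progression stays in the progression
after adding `m` or `p`, while everything from `a m` on is in `S_a` anyway; so `S_a` is a
numerical semigroup of multiplicity `m` and a `P`-semigroup. As `t ∤ a m + 1` and `m ≥ 2`,
the number `a m + 1` lies in `S_a` but not in `S_{a+1}`, so the `S_a` are pairwise distinct.
-/

/-- A numerical semigroup: a cofinite submonoid of `ℕ`. -/
def IsNumSgp (S : Set ℕ) : Prop :=
  0 ∈ S ∧ (∀ x ∈ S, ∀ y ∈ S, x + y ∈ S) ∧ Sᶜ.Finite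

/-- `S` is a `P`-semigroup: for every nonzero `s ∈ S` there is `p ∈ P` with `s + p ∈ S`. -/
def IsPSgpN (P : Finset ℕ) (S : Set ℕ) : Prop :=
  ∀ s ∈ S, s ≠ 0 → ∃ p ∈ P, s + p ∈ S

/-- `m` is the multiplicity of `S`, i.e. its least nonzero element. -/
def HasMult (S : Set ℕ) (m : ℕ) : Prop :=
  m ∈ S ∧ m ≠ 0 ∧ ∀ s ∈ S, s ≠ 0 → m ≤ s

-- The semigroup `S_a` of the paper, with `t = gcd m p`.
def progSgp (m t a : ℕ) : Set ℕ :=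
  {0} ∪ {x | ∃ k : ℕ, x = m + k * t} ∪ {x | a * m ≤ x}

namespace progSgp

variable {m t a x : ℕ}

theorem mem_iff :
    x ∈ progSgp m t a ↔ x = 0 ∨ (∃ k : ℕ, x = m + k * t) ∨ a * m ≤ x := by
  simp [progSgp, or_assoc]

theorem isNumSgp (htm : t ∣ m) : IsNumSgp (progSgp m t a) := by
  refine ⟨mem_iff.2 (Or.inl rfl), fun x hx y hy => ?_, ?_⟩
  · obtain ⟨c, rfl⟩ := htm
    rw [mem_iff] at hx hy ⊢
    rcases hx with rfl | ⟨k, rfl⟩ | hx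
    · simpa using hy
    · rcases hy with rfl | ⟨l, rfl⟩ | hy
      · exact Or.inr (Or.inl ⟨k, rfl⟩)
      · exact Or.inr (Or.inl ⟨k + l + c, by ring⟩)
      · exact Or.inr (Or.inr (by omega))
    · exact Or.inr (Or.inr (by omega))
  · refine (Set.finite_Iio (a * m)).subset fun x hx => ?_
    simp only [Set.mem_compl_iff, mem_iff, not_or] at hx
    exact Set.mem_Iio.2 (not_le.1 hx.2.2)

theorem hasMult (hm : m ≠ 0) (ha : 0 < a) : HasMult (progSgp m t a) m := by
  refine ⟨mem_iff.2 (Or.inr (Or.inl ⟨0, by ring⟩)), hm, fun s hs hs0 => ?_⟩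
  rcases mem_iff.1 hs with rfl | ⟨k, rfl⟩ | hs
  · exact absurd rfl hs0
  · exact Nat.le_add_right m _
  · exact le_trans (Nat.le_mul_of_pos_left m ha) hs

theorem isPSgpN {p : ℕ} {P : Finset ℕ} (htp : t ∣ p) (hpP : p ∈ P) :
    IsPSgpN P (progSgp m t a) := by
  obtain ⟨d, rfl⟩ := htp
  refine fun s hs hs0 => ⟨t * d, hpP, mem_iff.2 ?_⟩
  rcases mem_iff.1 hs with rfl | ⟨k, rfl⟩ | hs
  · exact absurd rfl hs0
  · exact Or.inr (Or.inl ⟨k + d, by ring⟩)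
  · exact Or.inr (Or.inr (by omega))

theorem antitone : Antitone (progSgp m t) := fun a b hab x hx => by
  rcases mem_iff.1 hx with h | h | h
  · exact mem_iff.2 (Or.inl h)
  · exact mem_iff.2 (Or.inr (Or.inl h))
  · exact mem_iff.2 (Or.inr (Or.inr (le_trans (Nat.mul_le_mul_right m hab) h)))

theorem mul_add_one_notMem_succ (hm : 2 ≤ m) (htm : t ∣ m) (ht1 : t ≠ 1) :
    a * m + 1 ∉ progSgp m t (a + 1) := by
  intro h
  rcases mem_iff.1 h with h | ⟨k, hk⟩ | h
  · omega
  · have : t ∣ a * m + 1 := hk ▸ dvd_add htm (dvd_mul_left t k)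
    exact ht1 (Nat.dvd_one.1 ((Nat.dvd_add_right (dvd_mul_of_dvd_right htm a)).1 this))
  · rw [Nat.succ_mul] at h
    omega

theorem strictAnti (hm : 2 ≤ m) (htm : t ∣ m) (ht1 : t ≠ 1) : StrictAnti (progSgp m t) :=
  strictAnti_nat_of_succ_lt fun a => by
    have hmem : a * m + 1 ∈ progSgp m t a := mem_iff.2 (Or.inr (Or.inr (Nat.le_succ _)))
    exact Set.ssubset_iff_subset_ne.2 ⟨antitone (Nat.le_succ a),
      fun h => mul_add_one_notMem_succ hm htm ht1 (h ▸ hmem)⟩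

end progSgp

theorem stmt_9_general (m p t : ℕ) (hm : 2 ≤ m)
    (ht : t = Nat.gcd m p) (ht1 : t ≠ 1)
    (P : Finset ℕ) (hpP : p ∈ P) :
    (∀ a : ℕ, 0 < a →
      IsNumSgp ({0} ∪ {x | ∃ k : ℕ, x = m + k * t} ∪ {x | a * m ≤ x}) ∧
      HasMult ({0} ∪ {x | ∃ k : ℕ, x = m + k * t} ∪ {x | a * m ≤ x}) m ∧
      IsPSgpN P ({0} ∪ {x | ∃ k : ℕ, x = m + k * t} ∪ {x | a * m ≤ x})) ∧
    {S : Set ℕ | IsNumSgp S ∧ HasMult S m ∧ IsPSgpN P S}.Infinite := by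
  have htm : t ∣ m := ht ▸ Nat.gcd_dvd_left m p
  have htp : t ∣ p := ht ▸ Nat.gcd_dvd_right m p
  have hS : ∀ a, 0 < a →
      IsNumSgp (progSgp m t a) ∧ HasMult (progSgp m t a) m ∧ IsPSgpN P (progSgp m t a) :=
    fun a ha => ⟨progSgp.isNumSgp htm, progSgp.hasMult (by omega) ha, progSgp.isPSgpN htp hpP⟩
  refine ⟨hS, Set.infinite_of_injective_forall_mem (f := fun n => progSgp m t (n + 1)) ?_ ?_⟩
  · exact (progSgp.strictAnti hm htm ht1).injective.comp Nat.succ_injective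
  · exact fun n => hS (n + 1) n.succ_pos

theorem stmt_9 (m p t : ℕ) (hm : 2 ≤ m) (hp : 0 < p)
    (ht : t = Nat.gcd m p) (ht1 : t ≠ 1)
    (P : Finset ℕ) (hPpos : ∀ q ∈ P, 0 < q) (hpP : p ∈ P) :
    (∀ a : ℕ, 0 < a →
      IsNumSgp ({0} ∪ {x | ∃ k : ℕ, x = m + k * t} ∪ {x | a * m ≤ x}) ∧
      HasMult ({0} ∪ {x | ∃ k : ℕ, x = m + k * t} ∪ {x | a * m ≤ x}) m ∧
      IsPSgpN P ({0} ∪ {x | ∃ k : ℕ, x = m + k * t} ∪ {x | a * m ≤ x})) ∧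
    {S : Set ℕ | IsNumSgp S ∧ HasMult S m ∧ IsPSgpN P S}.Infinite :=
  stmt_9_general m p t hm ht ht1 P hpP
end

section
/- Let P be a finite set of positive integers and m a positive integer such that ⟨m, p⟩ (the submonoid of ℕ generated by m and p) is a numerical semigroup (i.e., gcd(m, p) = 1) for every p ∈ P. Then the set of P-semigroups (numerical semigroups S with (s + P) ∩ S ≠ ∅ for all nonzero s ∈ S) with multiplicity m is finite. -/
/-- Supersets of a cofinite set form a finite family. -/
lemma finite_supersets {T : Set ℕ} (hT : Tᶜ.Finite) : {S : Set ℕ | T ⊆ S}.Finite := by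
  have h1 : Set.InjOn (fun S => S ∩ Tᶜ) {S : Set ℕ | T ⊆ S} := by
    intro S hS S' hS' h
    have : ∀ S₀ : Set ℕ, T ⊆ S₀ → S₀ = T ∪ (S₀ ∩ Tᶜ) := by
      intro S₀ hsub
      ext x
      constructor
      · intro hx
        by_cases hxT : x ∈ T
        · exact Or.inl hxT
        · exact Or.inr ⟨hx, hxT⟩
      · rintro (hx | ⟨hx, _⟩)
        · exact hsub hx
        · exact hx
    rw [this S hS, this S' hS', show S ∩ Tᶜ = S' ∩ Tᶜ from h]
  have h2 : ((fun S => S ∩ Tᶜ) '' {S : Set ℕ | T ⊆ S}).Finite := by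
    apply Set.Finite.subset hT.finite_subsets
    rintro A ⟨S, _, rfl⟩
    exact Set.inter_subset_right
  exact Set.Finite.of_finite_image h2 h1

lemma smul_mem_of_closed {S : Set ℕ} (h0 : 0 ∈ S)
    (hadd : ∀ x ∈ S, ∀ y ∈ S, x + y ∈ S) {x : ℕ} (hx : x ∈ S) : ∀ n : ℕ, n • x ∈ S := by
  intro n
  induction n with
  | zero => simpa using h0
  | succ k ih => rw [succ_nsmul]; exact hadd _ ih _ hx

theorem stmt_10 (P : Finset ℕ) (hPpos : ∀ p ∈ P, 0 < p)
    (m : ℕ) (hm : 0 < m) (hgcd : ∀ p ∈ P, Nat.gcd m p = 1) :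
    {S : Set ℕ | IsNumSgp S ∧ HasMult S m ∧ IsPSgpN P S}.Finite := by
  rcases eq_or_lt_of_le (show 1 ≤ m from hm) with h1 | h2
  · -- m = 1 : every such S is all of ℕ
    apply Set.Finite.subset (Set.finite_singleton (Set.univ : Set ℕ))
    rintro S ⟨⟨h0, hadd, -⟩, ⟨hmem, -, -⟩, -⟩
    have hone : (1 : ℕ) ∈ S := by rwa [← h1] at hmem
    have : ∀ n : ℕ, n ∈ S := by
      intro n
      induction n with
      | zero => exact h0
      | succ k ih => exact hadd k ih 1 hone
    simp only [Set.mem_singleton_iff]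
    exact Set.eq_univ_of_forall this
  · -- m ≥ 2
    have key : ∀ p ∈ P, ((AddSubmonoid.closure {m, m + p} : AddSubmonoid ℕ) : Set ℕ)ᶜ.Finite := by
      intro p hp
      have hcop : Nat.Coprime m (m + p) := by
        rw [add_comm, Nat.coprime_add_self_right]
        exact hgcd p hp
      have hmp1 : 1 < m + p := lt_of_lt_of_le h2 (Nat.le_add_right m p)
      have hfrob := frobeniusNumber_pair hcop h2 hmp1
      apply Set.Finite.subset (Set.finite_Iic (m * (m + p) - m - (m + p)))
      intro k hk
      exact hfrob.2 hk
    apply Set.Finite.subset (Set.Finite.biUnion P.finite_toSet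
      (fun p hp => finite_supersets (key p hp)))
    rintro S ⟨⟨h0, hadd, -⟩, ⟨hmem, hm0, -⟩, hP⟩
    obtain ⟨p, hp, hmp⟩ := hP m hmem hm0
    refine Set.mem_biUnion hp ?_
    intro x hx
    rw [SetLike.mem_coe, AddSubmonoid.mem_closure_pair] at hx
    obtain ⟨a, b, rfl⟩ := hx
    exact hadd _ (smul_mem_of_closed h0 hadd hmem a) _
      (smul_mem_of_closed h0 hadd hmp b)
end

section
/- The set of P-semigroups with multiplicity m is infinite if and only if there exists p ∈ P such that gcd(m, p) ≠ 1, where P is a finite set of positive integers and m ≥ 2. -/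
/-!
If every `p ∈ P` is coprime to `m`, then a `P`-semigroup `S` of multiplicity `m` contains `m` and
some `m + p` with `p ∈ P`, which are coprime; by the Frobenius bound `S` contains every integer
`≥ m (m + max P)`, leaving only finitely many possibilities for `S`.

If `d = gcd(m, p) > 1` for some `p ∈ P`, then for every `F` not divisible by `d` the set
`{0} ∪ {n ≥ m | d ∣ n} ∪ [F, ∞)` is a `P`-semigroup of multiplicity `m` (adding `p` preserves
divisibility by `d`), and `F` is its least element not divisible by `d`.
-/

def IsNumSgp.toAddSubmonoid {S : Set ℕ} (hS : IsNumSgp S) : AddSubmonoid ℕ where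
  carrier := S
  zero_mem' := hS.1
  add_mem' ha hb := hS.2.1 _ ha _ hb

theorem AddSubmonoid.nat_mem_of_coprime (S : AddSubmonoid ℕ) {a b n : ℕ} (ha : a ∈ S)
    (hb : b ∈ S) (hab : Nat.Coprime a b) (hn : (a - 1) * (b - 1) ≤ n) : n ∈ S := by
  obtain ⟨i, j, rfl⟩ := Nat.exists_add_mul_eq_of_gcd_dvd_of_mul_pred_le a b n
    (by simp [hab.gcd_eq_one]) (by simpa using hn)
  exact add_mem (nsmul_mem ha i) (nsmul_mem hb j)

theorem Ici_subset_of_isPSgpN {P : Finset ℕ} {S : Set ℕ} {m : ℕ} (hS : IsNumSgp S)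
    (hmult : HasMult S m) (hPS : IsPSgpN P S) (hcop : ∀ p ∈ P, Nat.Coprime m p) :
    Set.Ici (m * (m + P.sup id)) ⊆ S := by
  obtain ⟨p, hp, hmp⟩ := hPS m hmult.1 hmult.2.1
  have hpP : p ≤ P.sup id := Finset.le_sup (f := id) hp
  intro n hn
  refine hS.toAddSubmonoid.nat_mem_of_coprime hmult.1 hmp
    (Nat.coprime_self_add_right.2 (hcop p hp)) ?_
  calc (m - 1) * (m + p - 1) ≤ m * (m + P.sup id) := Nat.mul_le_mul (by omega) (by omega)
    _ ≤ n := hn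

theorem Set.finite_setOf_Ici_subset (N : ℕ) : {S : Set ℕ | Set.Ici N ⊆ S}.Finite := by
  refine ((Set.finite_Iio N).finite_subsets.image (· ∪ Set.Ici N)).subset fun S hS => ?_
  refine ⟨S ∩ Set.Iio N, Set.inter_subset_right, Set.ext fun n => ?_⟩
  rcases lt_or_ge n N with hn | hn
  · simp [hn]
  · simp [hn, hS (Set.mem_Ici.2 hn)]

def dvdSgp (d m F : ℕ) : Set ℕ :=
  {n | n = 0 ∨ (d ∣ n ∧ m ≤ n) ∨ F ≤ n}

section dvdSgp

variable {d m F : ℕ}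

theorem isNumSgp_dvdSgp : IsNumSgp (dvdSgp d m F) := by
  refine ⟨Or.inl rfl, ?_, (Set.finite_Iio F).subset fun n hn => ?_⟩
  · rintro x (rfl | ⟨hdx, hmx⟩ | hFx) y hy
    · simpa using hy
    · rcases hy with rfl | ⟨hdy, hmy⟩ | hFy
      · exact Or.inr (Or.inl ⟨hdx, hmx⟩)
      · exact Or.inr (Or.inl ⟨dvd_add hdx hdy, by omega⟩)
      · exact Or.inr (Or.inr (by omega))
    · exact Or.inr (Or.inr (by omega))
  · simp only [dvdSgp, Set.mem_compl_iff, Set.mem_ofPred_eq, not_or, not_le] at hn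
    exact hn.2.2

theorem hasMult_dvdSgp (hdm : d ∣ m) (hm : m ≠ 0) (hmF : m ≤ F) :
    HasMult (dvdSgp d m F) m := by
  refine ⟨Or.inr (Or.inl ⟨hdm, le_rfl⟩), hm, ?_⟩
  rintro s (rfl | ⟨-, hms⟩ | hFs) hs
  · exact absurd rfl hs
  · exact hms
  · omega

theorem isPSgpN_dvdSgp {P : Finset ℕ} {p : ℕ} (hp : p ∈ P) (hdp : d ∣ p) :
    IsPSgpN P (dvdSgp d m F) := by
  rintro s (rfl | ⟨hds, hms⟩ | hFs) hs
  · exact absurd rfl hs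
  · exact ⟨p, hp, Or.inr (Or.inl ⟨dvd_add hds hdp, by omega⟩)⟩
  · exact ⟨p, hp, Or.inr (Or.inr (by omega))⟩

theorem mem_dvdSgp_iff_of_not_dvd {n : ℕ} (hn : ¬ d ∣ n) : n ∈ dvdSgp d m F ↔ F ≤ n := by
  have hn0 : n ≠ 0 := by rintro rfl; exact hn (dvd_zero d)
  simp [dvdSgp, hn0, hn]

theorem dvdSgp_injOn : Set.InjOn (dvdSgp d m) {F | ¬ d ∣ F} := by
  intro F hF F' hF' h
  have hF_mem : F ∈ dvdSgp d m F' := h ▸ (mem_dvdSgp_iff_of_not_dvd hF).2 le_rfl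
  have hF'_mem : F' ∈ dvdSgp d m F := h.symm ▸ (mem_dvdSgp_iff_of_not_dvd hF').2 le_rfl
  exact le_antisymm ((mem_dvdSgp_iff_of_not_dvd hF').1 hF'_mem)
    ((mem_dvdSgp_iff_of_not_dvd hF).1 hF_mem)

end dvdSgp

theorem Nat.infinite_setOf_not_dvd {d : ℕ} (hd : 1 < d) : {n | ¬ d ∣ n}.Infinite := by
  refine Set.infinite_of_forall_exists_gt fun a => ⟨d * a + 1, fun h => ?_, by nlinarith⟩
  have := Nat.dvd_one.1 ((Nat.dvd_add_right (dvd_mul_right d a)).1 h)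
  omega

theorem stmt_11_general (P : Finset ℕ)
    (m : ℕ) (hm : 2 ≤ m) :
    {S : Set ℕ | IsNumSgp S ∧ HasMult S m ∧ IsPSgpN P S}.Infinite ↔
      ∃ p ∈ P, Nat.gcd m p ≠ 1 := by
  constructor
  · intro hinf
    by_contra! hcop
    exact hinf ((Set.finite_setOf_Ici_subset _).subset
      fun S ⟨hS, hmult, hPS⟩ => Ici_subset_of_isPSgpN hS hmult hPS hcop)
  · rintro ⟨p, hp, hgcd⟩
    have hd : 1 < m.gcd p := by
      have := Nat.gcd_pos_of_pos_left p (by omega : 0 < m)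
      omega
    refine (((Nat.infinite_setOf_not_dvd hd).sdiff (Set.finite_Iio m)).image
      ((dvdSgp_injOn (m := m)).mono Set.sdiff_subset)).mono ?_
    rintro _ ⟨F, ⟨-, hmF⟩, rfl⟩
    exact ⟨isNumSgp_dvdSgp, hasMult_dvdSgp (Nat.gcd_dvd_left m p) (by omega) (not_lt.1 hmF),
      isPSgpN_dvdSgp hp (Nat.gcd_dvd_right m p)⟩

theorem stmt_11 (P : Finset ℕ) (hPpos : ∀ p ∈ P, 0 < p)
    (m : ℕ) (hm : 2 ≤ m) :
    {S : Set ℕ | IsNumSgp S ∧ HasMult S m ∧ IsPSgpN P S}.Infinite ↔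
      ∃ p ∈ P, Nat.gcd m p ≠ 1 :=
  stmt_11_general P m hm
end

section
/- Let S be a C-semigroup with set of special gaps SG(S), and let x ∈ SG(S). Then S ∪ {x} is a C-semigroup (a submonoid of C with finite complement in C). -/
section SpecialGap

variable {M : Type*} [AddCommMonoid M] {S : Set M} {x : M}

theorem add_mem_insert_self_left (hxs : ∀ s ∈ S, s ≠ 0 → x + s ∈ S) {b : M}
    (hb : b ∈ S) : x + b ∈ insert x S := by
  rcases eq_or_ne b 0 with rfl | hb0
  · rw [add_zero]
    exact Set.mem_insert x S
  · exact Set.mem_insert_of_mem x (hxs b hb hb0)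

theorem add_mem_insert_of_special (hadd : ∀ a ∈ S, ∀ b ∈ S, a + b ∈ S) (h2x : x + x ∈ S)
    (hxs : ∀ s ∈ S, s ≠ 0 → x + s ∈ S) :
    ∀ a ∈ insert x S, ∀ b ∈ insert x S, a + b ∈ insert x S := by
  rintro a (rfl | ha) b (rfl | hb)
  · exact Set.mem_insert_of_mem _ h2x
  · exact add_mem_insert_self_left hxs hb
  · rw [add_comm]
    exact add_mem_insert_self_left hxs ha
  · exact Set.mem_insert_of_mem x (hadd a ha b hb)

end SpecialGap

theorem stmt_13_general {d : ℕ} (C : AddSubmonoid (Fin d → ℕ))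
    (S : Set (Fin d → ℕ)) (hS : IsCSgp C S)
    (x : Fin d → ℕ) (hx : x ∈ (C : Set (Fin d → ℕ)) \ S)
    (h2x : x + x ∈ S) (hxs : ∀ s ∈ S, s ≠ 0 → x + s ∈ S) :
    IsCSgp C (insert x S) := by
  obtain ⟨h0, hadd, hsub, hfin⟩ := hS
  exact ⟨Set.mem_insert_of_mem x h0, add_mem_insert_of_special hadd h2x hxs,
    Set.insert_subset hx.1 hsub, hfin.subset (Set.sdiff_subset_sdiff_right (Set.subset_insert x S))⟩

theorem stmt_13 {d : ℕ} (C : AddSubmonoid (Fin d → ℕ)) (hCfg : C.FG)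
    (S : Set (Fin d → ℕ)) (hS : IsCSgp C S)
    (x : Fin d → ℕ) (hx : x ∈ (C : Set (Fin d → ℕ)) \ S)
    (h2x : x + x ∈ S) (hxs : ∀ s ∈ S, s ≠ 0 → x + s ∈ S) :
    IsCSgp C (insert x S) :=
  stmt_13_general C S hS x hx h2x hxs
end

section
/- Let S and T be C-semigroups that are P-semigroups, with T covering S in the sense T = S ∪ {Fb(S)}, S ≠ C. Then S = T \ {a} where a = Fb(S) is a minimal generator of T with a ≻ Fb(T). Conversely, if a ∈ msg(T) satisfies a ≻ Fb(T) and T \ {a} is a P-semigroup, then T = (T \ {a}) ∪ {Fb(T \ {a})} and Fb(T \ {a}) = a. -/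
/-! Adjoining the Frobenius element `a` of `S` cannot produce a decomposition `a = x + y` with
`x, y ∈ S \ {0}`, since `S` is closed under addition and `a ∉ S`; so `a` is a minimal generator of
`T = S ∪ {a}`, every gap of `T` is a gap of `S` other than `a`, and `S = T \ {a}`. Conversely,
removing `a ∈ T` adds exactly the gap `a` to `C \ T`, and `a` dominates the (finite) gap set of `T`
because it dominates its maximum. -/

section TotalPreorder

variable {α : Type*} (le : α → α → Prop)

lemma Set.Finite.exists_greatest_of_total (hrefl : ∀ a, le a a)
    (htrans : ∀ a b c, le a b → le b c → le a c) (htot : ∀ a b, le a b ∨ le b a) {s : Set α}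
    (hs : s.Finite) (hne : s.Nonempty) : ∃ g ∈ s, ∀ x ∈ s, le x g := by
  let _ : Preorder α := { le := le, le_refl := hrefl, le_trans := htrans }
  obtain ⟨g, hg⟩ := hs.exists_maximal hne
  exact ⟨g, hg.prop, fun x hx => (htot x g).elim id (hg.le_of_ge hx)⟩

lemma Set.Finite.forall_le_of_greatest_le (hrefl : ∀ a, le a a)
    (htrans : ∀ a b c, le a b → le b c → le a c) (htot : ∀ a b, le a b ∨ le b a) {s : Set α}
    (hs : s.Finite) {a : α} (h : ∀ g ∈ s, (∀ x ∈ s, le x g) → le g a) : ∀ x ∈ s, le x a := by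
  rcases s.eq_empty_or_nonempty with rfl | hne
  · simp
  obtain ⟨g, hg, hgmax⟩ := hs.exists_greatest_of_total le hrefl htrans htot hne
  exact fun x hx => htrans x g a (hgmax x hx) (h g hg hgmax)

end TotalPreorder

lemma isMinGen_insert {d : ℕ} {S : Set (Fin d → ℕ)} {a : Fin d → ℕ} (h0 : 0 ∈ S)
    (hadd : ∀ x ∈ S, ∀ y ∈ S, x + y ∈ S) (ha : a ∉ S) : IsMinGen (insert a S) a := by
  refine ⟨S.mem_insert a, fun h => ha (h ▸ h0), ?_⟩
  rintro ⟨x, hx, y, hy, hx0, hy0, rfl⟩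
  rcases hx with hx | hx
  · exact hy0 (left_eq_add.mp hx)
  rcases hy with hy | hy
  · exact hx0 (right_eq_add.mp hy)
  exact ha (hadd x hx y hy)

lemma Set.diff_diff_singleton_of_mem {α : Type*} {C T : Set α} {a : α} (hTC : T ⊆ C)
    (ha : a ∈ T) : C \ (T \ {a}) = insert a (C \ T) := by
  rw [Set.sdiff_sdiff_right, Set.inter_eq_right.mpr (Set.singleton_subset_iff.mpr (hTC ha)),
    Set.union_singleton]

theorem stmt_14_general {d : ℕ} (C : AddSubmonoid (Fin d → ℕ))
    (P : Set (Fin d → ℕ))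
    (le : (Fin d → ℕ) → (Fin d → ℕ) → Prop) (hle : IsMonomialOrder d le) :
    (∀ S T : Set (Fin d → ℕ), ∀ Fb : Fin d → ℕ,
      IsCSgp C S → IsPSgp P S → IsCSgp C T → IsPSgp P T →
      S ≠ (C : Set (Fin d → ℕ)) →
      Fb ∈ (C : Set (Fin d → ℕ)) \ S →
      (∀ x ∈ (C : Set (Fin d → ℕ)) \ S, le x Fb) →
      T = insert Fb S →
        S = T \ {Fb} ∧ IsMinGen T Fb ∧
          ∀ g ∈ (C : Set (Fin d → ℕ)) \ T,
            (∀ x ∈ (C : Set (Fin d → ℕ)) \ T, le x g) → le g Fb ∧ g ≠ Fb) ∧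
    (∀ T : Set (Fin d → ℕ), ∀ a : Fin d → ℕ,
      IsCSgp C T → IsPSgp P T → IsMinGen T a →
      (∀ g ∈ (C : Set (Fin d → ℕ)) \ T,
        (∀ x ∈ (C : Set (Fin d → ℕ)) \ T, le x g) → le g a ∧ g ≠ a) →
      IsPSgp P (T \ {a}) →
        a ∈ (C : Set (Fin d → ℕ)) \ (T \ {a}) ∧
        (∀ x ∈ (C : Set (Fin d → ℕ)) \ (T \ {a}), le x a) ∧
        T = insert a (T \ {a})) := by
  obtain ⟨hrefl, -, htrans, htot, -, -⟩ := hle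
  constructor
  · rintro S T Fb ⟨hS0, hSadd, -⟩ - - - - ⟨-, hFbS⟩ hmax rfl
    refine ⟨(Set.insert_sdiff_self_of_notMem hFbS).symm, isMinGen_insert hS0 hSadd hFbS, ?_⟩
    rintro g ⟨hgC, hgT⟩ -
    exact ⟨hmax g ⟨hgC, fun hg => hgT (Or.inr hg)⟩, fun h => hgT (Or.inl h)⟩
  · rintro T a ⟨-, -, hTC, hfin⟩ - ⟨haT, -⟩ hFb -
    rw [Set.diff_diff_singleton_of_mem hTC haT, Set.insert_sdiff_singleton,
      Set.insert_eq_of_mem haT]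
    refine ⟨Set.mem_insert a _, ?_, rfl⟩
    rintro x (rfl | hx)
    · exact hrefl x
    · exact hfin.forall_le_of_greatest_le le hrefl htrans htot
        (fun g hg hgmax => (hFb g hg hgmax).1) x hx

theorem stmt_14 {d : ℕ} (C : AddSubmonoid (Fin d → ℕ)) (hCfg : C.FG)
    (P : Set (Fin d → ℕ)) (hPfin : P.Finite) (hP0 : (0 : Fin d → ℕ) ∉ P)
    (le : (Fin d → ℕ) → (Fin d → ℕ) → Prop) (hle : IsMonomialOrder d le) :
    (∀ S T : Set (Fin d → ℕ), ∀ Fb : Fin d → ℕ,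
      IsCSgp C S → IsPSgp P S → IsCSgp C T → IsPSgp P T →
      S ≠ (C : Set (Fin d → ℕ)) →
      Fb ∈ (C : Set (Fin d → ℕ)) \ S →
      (∀ x ∈ (C : Set (Fin d → ℕ)) \ S, le x Fb) →
      T = insert Fb S →
        S = T \ {Fb} ∧ IsMinGen T Fb ∧
          ∀ g ∈ (C : Set (Fin d → ℕ)) \ T,
            (∀ x ∈ (C : Set (Fin d → ℕ)) \ T, le x g) → le g Fb ∧ g ≠ Fb) ∧
    (∀ T : Set (Fin d → ℕ), ∀ a : Fin d → ℕ,
      IsCSgp C T → IsPSgp P T → IsMinGen T a →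
      (∀ g ∈ (C : Set (Fin d → ℕ)) \ T,
        (∀ x ∈ (C : Set (Fin d → ℕ)) \ T, le x g) → le g a ∧ g ≠ a) →
      IsPSgp P (T \ {a}) →
        a ∈ (C : Set (Fin d → ℕ)) \ (T \ {a}) ∧
        (∀ x ∈ (C : Set (Fin d → ℕ)) \ (T \ {a}), le x a) ∧
        T = insert a (T \ {a})) :=
  stmt_14_general C P le hle
end

section
/- Let C be a finitely generated integer cone, ⪯ a monomial order with finite lower sets, S a C-semigroup with S ≠ C, and define the sequence S_0 = S, S_{i+1} = S_i ∪ {Fb(S_i)} if S_i ≠ C and S_{i+1} = C otherwise. Then S_{g(S)} = C, where g(S) = #(C \ S) is the genus of S. In particular, every C-semigroup is obtained from C by removing its gaps one at a time in decreasing ⪯-order. -/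
theorem stmt_15 {d : ℕ} (C : AddSubmonoid (Fin d → ℕ)) (hCfg : C.FG)
    (le : (Fin d → ℕ) → (Fin d → ℕ) → Prop) (hle : IsMonomialOrder d le)
    (hlow : ∀ f ∈ (C : Set (Fin d → ℕ)),
      {x ∈ (C : Set (Fin d → ℕ)) | le x f ∧ x ≠ f}.Finite)
    (S : Set (Fin d → ℕ)) (hS : IsCSgp C S) (hSne : S ≠ (C : Set (Fin d → ℕ)))
    (Sseq : ℕ → Set (Fin d → ℕ)) (h0 : Sseq 0 = S)
    (hrec : ∀ i : ℕ,
      (Sseq i ≠ (C : Set (Fin d → ℕ)) →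
        ∃ f, f ∈ (C : Set (Fin d → ℕ)) \ Sseq i ∧
          (∀ x ∈ (C : Set (Fin d → ℕ)) \ Sseq i, le x f) ∧
          Sseq (i + 1) = insert f (Sseq i)) ∧
      (Sseq i = (C : Set (Fin d → ℕ)) → Sseq (i + 1) = (C : Set (Fin d → ℕ)))) :
    Sseq (((C : Set (Fin d → ℕ)) \ S).ncard) = (C : Set (Fin d → ℕ)) := by
  obtain ⟨-, -, hsub, hfin⟩ := hS
  suffices key : ∀ n i, Sseq i ⊆ (C : Set (Fin d → ℕ)) →
      ((C : Set (Fin d → ℕ)) \ Sseq i).Finite →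
      ((C : Set (Fin d → ℕ)) \ Sseq i).ncard ≤ n →
      Sseq (i + n) = (C : Set (Fin d → ℕ)) by
    have := key (((C : Set (Fin d → ℕ)) \ S).ncard) 0
      (by rw [h0]; exact hsub) (by rw [h0]; exact hfin) (by rw [h0])
    simpa using this
  intro n
  induction n with
  | zero =>
    intro i hi hf hn
    have hemp : ((C : Set (Fin d → ℕ)) \ Sseq i) = ∅ :=
      (Set.ncard_eq_zero hf).mp (Nat.le_zero.mp hn)
    simp only [Nat.add_zero]
    apply Set.Subset.antisymm hi
    intro x hx
    by_contra hxs
    exact (Set.eq_empty_iff_forall_notMem.mp hemp x) ⟨hx, hxs⟩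
  | succ n ih =>
    intro i hi hf hn
    by_cases hC : Sseq i = (C : Set (Fin d → ℕ))
    · have h1 : Sseq (i + 1) = (C : Set (Fin d → ℕ)) := (hrec i).2 hC
      have := ih (i + 1) (by rw [h1]) (by rw [h1]; simp) (by rw [h1]; simp)
      rw [show i + (n + 1) = i + 1 + n by omega]
      exact this
    · obtain ⟨f, hfmem, -, hstep⟩ := (hrec i).1 hC
      have hdiff : (C : Set (Fin d → ℕ)) \ Sseq (i + 1) =
          ((C : Set (Fin d → ℕ)) \ Sseq i) \ {f} := by
        rw [hstep]; ext x; simp [Set.mem_diff]; tauto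
      have hsub1 : Sseq (i + 1) ⊆ (C : Set (Fin d → ℕ)) := by
        rw [hstep]; exact Set.insert_subset hfmem.1 hi
      have hfin1 : ((C : Set (Fin d → ℕ)) \ Sseq (i + 1)).Finite := by
        rw [hdiff]; exact hf.diff
      have hcard : ((C : Set (Fin d → ℕ)) \ Sseq (i + 1)).ncard ≤ n := by
        rw [hdiff, Set.ncard_diff_singleton_of_mem hfmem]
        omega
      have := ih (i + 1) hsub1 hfin1 hcard
      rw [show i + (n + 1) = i + 1 + n by omega]
      exact this
end

section
/- Let S be a C-semigroup with multiplicity m(S) = min_⪯(S \ {0}) and suppose x ∈ SG(S) is a special gap with x ≺ m(S). Then T = S ∪ {x} is a C-semigroup with m(T) = x, and T \ {m(T)} = S. -/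
section

variable {d : ℕ}

theorem add_mem_insert_of_specialGap {S : Set (Fin d → ℕ)}
    (hadd : ∀ a ∈ S, ∀ b ∈ S, a + b ∈ S) {x : Fin d → ℕ}
    (h2x : x + x ∈ S) (hxs : ∀ s ∈ S, s ≠ 0 → x + s ∈ S) :
    ∀ a ∈ insert x S, ∀ b ∈ insert x S, a + b ∈ insert x S := by
  have hx_add : ∀ s ∈ S, x + s ∈ insert x S := fun s hs => by
    rcases eq_or_ne s 0 with rfl | hs0
    · simp
    · exact Set.mem_insert_of_mem _ (hxs s hs hs0)
  rintro a (rfl | ha) b (rfl | hb)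
  · exact Set.mem_insert_of_mem _ h2x
  · exact hx_add b hb
  · rw [add_comm]; exact hx_add a ha
  · exact Set.mem_insert_of_mem _ (hadd a ha b hb)

theorem IsCSgp.insert {C : AddSubmonoid (Fin d → ℕ)} {S : Set (Fin d → ℕ)} (hS : IsCSgp C S)
    {x : Fin d → ℕ} (hxC : x ∈ C) (h2x : x + x ∈ S) (hxs : ∀ s ∈ S, s ≠ 0 → x + s ∈ S) :
    IsCSgp C (insert x S) := by
  obtain ⟨h0S, hadd, hSC, hfin⟩ := hS
  exact ⟨Set.mem_insert_of_mem _ h0S, add_mem_insert_of_specialGap hadd h2x hxs,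
    Set.insert_subset hxC hSC, hfin.subset (Set.sdiff_subset_sdiff_right (Set.subset_insert x S))⟩

end

theorem stmt_16_general {d : ℕ} (C : AddSubmonoid (Fin d → ℕ))
    (le : (Fin d → ℕ) → (Fin d → ℕ) → Prop) (hle : IsMonomialOrder d le)
    (S : Set (Fin d → ℕ)) (hS : IsCSgp C S)
    (m : Fin d → ℕ)
    (hmmin : ∀ s ∈ S, s ≠ 0 → le m s)
    (x : Fin d → ℕ) (hx : x ∈ (C : Set (Fin d → ℕ)) \ S)
    (h2x : x + x ∈ S) (hxs : ∀ s ∈ S, s ≠ 0 → x + s ∈ S)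
    (hxm : le x m ∧ x ≠ m) :
    IsCSgp C (insert x S) ∧
      (x ∈ insert x S ∧ x ≠ 0 ∧ ∀ s ∈ insert x S, s ≠ 0 → le x s) ∧
      insert x S \ {x} = S := by
  obtain ⟨hxC, hxS⟩ := hx
  obtain ⟨hrefl, -, htrans, -⟩ := hle
  have hx0 : x ≠ 0 := fun h => hxS (h ▸ hS.1)
  have hx_min : ∀ s ∈ insert x S, s ≠ 0 → le x s := by
    rintro s (rfl | hs) hs0
    · exact hrefl s
    · exact htrans x m s hxm.1 (hmmin s hs hs0)
  exact ⟨hS.insert hxC h2x hxs, ⟨Set.mem_insert x S, hx0, hx_min⟩,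
    Set.insert_sdiff_self_of_notMem hxS⟩

theorem stmt_16 {d : ℕ} (C : AddSubmonoid (Fin d → ℕ)) (hCfg : C.FG)
    (le : (Fin d → ℕ) → (Fin d → ℕ) → Prop) (hle : IsMonomialOrder d le)
    (S : Set (Fin d → ℕ)) (hS : IsCSgp C S)
    (m : Fin d → ℕ) (hmS : m ∈ S) (hm0 : m ≠ 0)
    (hmmin : ∀ s ∈ S, s ≠ 0 → le m s)
    (x : Fin d → ℕ) (hx : x ∈ (C : Set (Fin d → ℕ)) \ S)
    (h2x : x + x ∈ S) (hxs : ∀ s ∈ S, s ≠ 0 → x + s ∈ S)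
    (hxm : le x m ∧ x ≠ m) :
    IsCSgp C (insert x S) ∧
      (x ∈ insert x S ∧ x ≠ 0 ∧ ∀ s ∈ insert x S, s ≠ 0 → le x s) ∧
      insert x S \ {x} = S :=
  stmt_16_general C le hle S hS m hmmin x hx h2x hxs hxm
end

section
/- Let S be a C-semigroup that is a P-semigroup, and T = S ∪ {x} for a gap x of S. If T is a P-semigroup with x = m(T), then x ∈ SG(S), x ≺ m(S), and there exists p ∈ P with x + p ∈ S. -/
/-! Every sum `x + y` with `y ≠ 0` formed in `T = S ∪ {x}` differs from `x`, so it already lies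
in `S`. Closure of `T` then makes `x` a special gap of `S`, minimality of `x` in `T` gives
`x ≺ m(S)`, and the `P`-semigroup property of `T` at `x` yields `p ∈ P` with `x + p ∈ S`. -/

section InsertGap

variable {M : Type*} [AddLeftCancelMonoid M] {S : Set M} {x y : M}

theorem mem_of_add_mem_insert_self (h : x + y ∈ insert x S) (hy : y ≠ 0) : x + y ∈ S :=
  h.resolve_left fun h' => hy (add_eq_left.mp h')

theorem add_mem_of_insert_closed (hT : ∀ a ∈ insert x S, ∀ b ∈ insert x S, a + b ∈ insert x S)
    (hy : y ∈ insert x S) (hy0 : y ≠ 0) : x + y ∈ S :=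
  mem_of_add_mem_insert_self (hT x (Set.mem_insert x S) y hy) hy0

end InsertGap

theorem stmt_17_general {d : ℕ} (C : AddSubmonoid (Fin d → ℕ))
    (P : Set (Fin d → ℕ)) (hP0 : (0 : Fin d → ℕ) ∉ P)
    (le : (Fin d → ℕ) → (Fin d → ℕ) → Prop)
    (S : Set (Fin d → ℕ)) (hS : IsCSgp C S)
    (x : Fin d → ℕ) (hx : x ∈ (C : Set (Fin d → ℕ)) \ S)
    (hT : IsCSgp C (insert x S)) (hTP : IsPSgp P (insert x S))
    (hxmT : ∀ t ∈ insert x S, t ≠ 0 → le x t) :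
    (x + x ∈ S ∧ ∀ s ∈ S, s ≠ 0 → x + s ∈ S) ∧
      (∀ s ∈ S, s ≠ 0 → le x s ∧ x ≠ s) ∧
      ∃ p ∈ P, x + p ∈ S := by
  have hxS : x ∉ S := hx.2
  have hx0 : x ≠ 0 := fun h => hxS (h ▸ hS.1)
  have hclosed := hT.2.1
  obtain ⟨p, hp, hxp⟩ := hTP x (Set.mem_insert x S) hx0
  refine ⟨⟨add_mem_of_insert_closed hclosed (Set.mem_insert x S) hx0,
      fun s hs hs0 => add_mem_of_insert_closed hclosed (Set.mem_insert_of_mem x hs) hs0⟩,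
    fun s hs hs0 => ⟨hxmT s (Set.mem_insert_of_mem x hs) hs0, fun h => hxS (h ▸ hs)⟩,
    p, hp, mem_of_add_mem_insert_self hxp fun h => hP0 (h ▸ hp)⟩

theorem stmt_17 {d : ℕ} (C : AddSubmonoid (Fin d → ℕ)) (hCfg : C.FG)
    (P : Set (Fin d → ℕ)) (hPfin : P.Finite) (hP0 : (0 : Fin d → ℕ) ∉ P)
    (le : (Fin d → ℕ) → (Fin d → ℕ) → Prop) (hle : IsMonomialOrder d le)
    (S : Set (Fin d → ℕ)) (hS : IsCSgp C S) (hSP : IsPSgp P S)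
    (x : Fin d → ℕ) (hx : x ∈ (C : Set (Fin d → ℕ)) \ S)
    (hT : IsCSgp C (insert x S)) (hTP : IsPSgp P (insert x S))
    (hxmT : ∀ t ∈ insert x S, t ≠ 0 → le x t) :
    (x + x ∈ S ∧ ∀ s ∈ S, s ≠ 0 → x + s ∈ S) ∧
      (∀ s ∈ S, s ≠ 0 → le x s ∧ x ≠ s) ∧
      ∃ p ∈ P, x + p ∈ S :=
  stmt_17_general C P hP0 le S hS x hx hT hTP hxmT
end
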